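/- Let f : S¹ → S¹ be an expansive covering map of degree d ≥ 2 and let P(f; {a₀,…,a_r}) be a Markov partition for f satisfying conditions (uv) and (hol). Let a ∈ F₁ = {a₀,…,a_r} be a periodic point of f with orientation-preserving period q, let n ∈ ℕ, and let A be a complementary arc of F_n having a as an endpoint. Then A contains at least two and at most (r+1)^q complementary arcs of F_{n+q}. -/

import Mathlib

open Set Filter

noncomputable section

/-- The unit circle in `ℂ`. -/
def S1 : Set ℂ := {z : ℂ | ‖z‖ = 1}

/-- The parametrization `x ↦ e^{2πix}` of the unit circle. -/
noncomputable def expMap (x : ℝ) : ℂ := Complex.exp (2 * Real.pi * Complex.I * x)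

/-- The closed positively oriented arc from `a` to `b` on the unit circle. -/
def closedArc (a b : ℂ) : Set ℂ :=
  {z : ℂ | ∃ s t u : ℝ, a = expMap s ∧ z = expMap t ∧ b = expMap u ∧
    s ≤ t ∧ t ≤ u ∧ u < s + 1}

/-- The open positively oriented arc from `a` to `b` on the unit circle. -/
def openArc (a b : ℂ) : Set ℂ :=
  {z : ℂ | ∃ s t u : ℝ, a = expMap s ∧ z = expMap t ∧ b = expMap u ∧
    s < t ∧ t < u ∧ u < s + 1}

/-- `f` restricted to the unit circle is a covering of signed degree `d`:
it lifts under `x ↦ e^{2πix}` to a continuous map `F` with `F (x+1) = F x + d`.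
`d > 0` corresponds to an orientation-preserving covering of degree `d`, and
`d < 0` to an orientation-reversing covering of degree `|d|`. -/
def IsCircleCovering (f : ℂ → ℂ) (d : ℤ) : Prop :=
  ∃ F : ℝ → ℝ, Continuous F ∧ (∀ x : ℝ, f (expMap x) = expMap (F x)) ∧
    ∀ x : ℝ, F (x + 1) = F x + d

/-- The iterate `f^[m]` is an orientation-preserving circle covering. -/
def OrientPresIter (f : ℂ → ℂ) (m : ℕ) : Prop :=
  ∃ e : ℤ, 0 < e ∧ IsCircleCovering (f^[m]) e

/-- The iterate `f^[m]` is an orientation-reversing circle covering. -/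
def OrientRevIter (f : ℂ → ℂ) (m : ℕ) : Prop :=
  ∃ e : ℤ, e < 0 ∧ IsCircleCovering (f^[m]) e

/-- Expansivity of `f` on the unit circle. -/
def ExpansiveOn (f : ℂ → ℂ) : Prop :=
  ∃ δ : ℝ, 0 < δ ∧ ∀ a ∈ S1, ∀ b ∈ S1, a ≠ b →
    ∃ n : ℕ, δ < ‖f^[n] a - f^[n] b‖

/-- `h` is an orientation-preserving homeomorphism of the unit circle:
it lifts to a continuous strictly increasing map `H : ℝ → ℝ` commuting with `x ↦ x + 1`. -/
def OPCircleHomeo (h : ℂ → ℂ) : Prop :=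
  ∃ H : ℝ → ℝ, Continuous H ∧ StrictMono H ∧ (∀ x : ℝ, H (x + 1) = H x + 1) ∧
    ∀ x : ℝ, h (expMap x) = expMap (H x)

/-- A Markov partition `P(f; {a₀, …, a_r})` for a circle covering `f`. -/
structure MarkovPartition (f : ℂ → ℂ) (r : ℕ) (a : Fin (r + 1) → ℂ) : Prop where
  rpos : 1 ≤ r
  /-- The points `a₀, …, a_r` lie on the unit circle in positive cyclic order. -/
  cyclic : ∃ x : Fin (r + 1) → ℝ, StrictMono x ∧ (∀ k, a k = expMap (x k)) ∧
    x (Fin.last r) < x 0 + 1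
  /-- The closed arcs `A_k = [a_k, a_{k+1}]` cover the circle. -/
  cover : S1 ⊆ ⋃ k, closedArc (a k) (a (k + 1))
  /-- The arcs have pairwise disjoint interiors. -/
  disjInt : ∀ k j : Fin (r + 1), k ≠ j →
    openArc (a k) (a (k + 1)) ∩ openArc (a j) (a (j + 1)) = ∅
  /-- `f` is injective on each open arc. -/
  injOn : ∀ k, Set.InjOn f (openArc (a k) (a (k + 1)))
  /-- The Markov property. -/
  markov : ∀ k j : Fin (r + 1),
    (f '' openArc (a k) (a (k + 1)) ∩ openArc (a j) (a (j + 1))).Nonempty →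
    openArc (a j) (a (j + 1)) ⊆ f '' openArc (a k) (a (k + 1))
  /-- The set `{a₀, …, a_r}` is forward invariant. -/
  invariant : ∀ k, ∃ j, f (a k) = a j

/-- Condition (uv): piecewise conformal extensions on open sets `U_k`, `V_k` with
`⋃ {U_j : A_j ⊆ f(A_k)} ⊆ V_k`. -/
def CondUV (f : ℂ → ℂ) (r : ℕ) (a : Fin (r + 1) → ℂ) : Prop :=
  ∃ (U V : Fin (r + 1) → Set ℂ) (fk : Fin (r + 1) → ℂ → ℂ),
    (∀ k, IsOpen (U k)) ∧ (∀ k, IsOpen (V k)) ∧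
    (∀ k, openArc (a k) (a (k + 1)) ⊆ U k) ∧
    (∀ k, f '' openArc (a k) (a (k + 1)) ⊆ V k) ∧
    (∀ k, Set.InjOn (fk k) (U k)) ∧
    (∀ k, DifferentiableOn ℂ (fk k) (U k)) ∧
    (∀ k, fk k '' U k = V k) ∧
    (∀ k, Set.EqOn (fk k) f (openArc (a k) (a (k + 1)))) ∧
    (∀ k j, openArc (a j) (a (j + 1)) ⊆ f '' openArc (a k) (a (k + 1)) → U j ⊆ V k)

/-- Condition (hol): the restriction of `f` to each closed arc of the partition extends
holomorphically to a neighborhood of either endpoint. -/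
def CondHol (f : ℂ → ℂ) (r : ℕ) (a : Fin (r + 1) → ℂ) : Prop :=
  ∀ k : Fin (r + 1),
    (∃ W : Set ℂ, IsOpen W ∧ a k ∈ W ∧ ∃ g : ℂ → ℂ, DifferentiableOn ℂ g W ∧
      Set.EqOn g f (W ∩ closedArc (a k) (a (k + 1)))) ∧
    (∃ W : Set ℂ, IsOpen W ∧ a (k + 1) ∈ W ∧ ∃ g : ℂ → ℂ, DifferentiableOn ℂ g W ∧
      Set.EqOn g f (W ∩ closedArc (a k) (a (k + 1))))

/-- `q` is the orientation-preserving period of the periodic point `a`: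
the least `n ≥ 1` with `f^[n] a = a` and `f^[n]` orientation-preserving. -/
def OPPeriod (f : ℂ → ℂ) (a : ℂ) (q : ℕ) : Prop :=
  0 < q ∧ f^[q] a = a ∧ OrientPresIter f q ∧
    ∀ m : ℕ, 0 < m → m < q → ¬(f^[m] a = a ∧ OrientPresIter f m)

/-- The one-sided multiplier `λ(a⁺)` of the first return map `f^[q]` exists and equals `lam`. -/
def HasMultiplierPlus (f : ℂ → ℂ) (a : ℂ) (q : ℕ) (lam : ℝ) : Prop :=
  0 ≤ lam ∧ ∃ z₀ ∈ S1, z₀ ≠ a ∧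
    Filter.Tendsto (fun z : ℂ => (f^[q] z - a) / (z - a))
      (nhdsWithin a (openArc a z₀)) (nhds (lam : ℂ))

/-- The one-sided multiplier `λ(a⁻)` of the first return map `f^[q]` exists and equals `lam`. -/
def HasMultiplierMinus (f : ℂ → ℂ) (a : ℂ) (q : ℕ) (lam : ℝ) : Prop :=
  0 ≤ lam ∧ ∃ z₀ ∈ S1, z₀ ≠ a ∧
    Filter.Tendsto (fun z : ℂ => (f^[q] z - a) / (z - a))
      (nhdsWithin a (openArc z₀ a)) (nhds (lam : ℂ))

/-- `a` is an isolated fixed point (on the circle) of the return map `f^[q]`. -/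
def IsolatedFixedPt (f : ℂ → ℂ) (a : ℂ) (q : ℕ) : Prop :=
  ∃ ε : ℝ, 0 < ε ∧ ∀ z ∈ S1, z ≠ a → ‖z - a‖ < ε → f^[q] z ≠ z

/-- The return map `f^[q]` has, on the positive side of `a`, a holomorphic extension
with Taylor expansion `z + c (z - a)^(N+1) + O((z - a)^(N+2))`, `c ≠ 0`;
i.e. the parabolic point `a⁺` has `N(a⁺) = N`. -/
def TaylorPlus (f : ℂ → ℂ) (a : ℂ) (q : ℕ) (N : ℕ) : Prop :=
  0 < N ∧ ∃ z₁ ∈ S1, z₁ ≠ a ∧ ∃ W : Set ℂ, IsOpen W ∧ closedArc a z₁ ⊆ W ∧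
    ∃ g : ℂ → ℂ, DifferentiableOn ℂ g W ∧ Set.EqOn g (f^[q]) (closedArc a z₁) ∧
      ∃ c : ℂ, c ≠ 0 ∧
        Asymptotics.IsBigO (nhds a)
          (fun z : ℂ => g z - z - c * (z - a) ^ (N + 1))
          (fun z : ℂ => (z - a) ^ (N + 2))

/-- Negative-side version of `TaylorPlus`: the parabolic point `a⁻` has `N(a⁻) = N`. -/
def TaylorMinus (f : ℂ → ℂ) (a : ℂ) (q : ℕ) (N : ℕ) : Prop :=
  0 < N ∧ ∃ z₁ ∈ S1, z₁ ≠ a ∧ ∃ W : Set ℂ, IsOpen W ∧ closedArc z₁ a ⊆ W ∧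
    ∃ g : ℂ → ℂ, DifferentiableOn ℂ g W ∧ Set.EqOn g (f^[q]) (closedArc z₁ a) ∧
      ∃ c : ℂ, c ≠ 0 ∧
        Asymptotics.IsBigO (nhds a)
          (fun z : ℂ => g z - z - c * (z - a) ^ (N + 1))
          (fun z : ℂ => (z - a) ^ (N + 2))

/-- No iterate `f^[m'] a` with `m' < m` is a periodic point; used to express that
`m` is the minimal integer with `f^[m] a` periodic. -/
def MinPreperiod (f : ℂ → ℂ) (a : ℂ) (m : ℕ) : Prop :=
  ∀ m' : ℕ, m' < m → ¬ ∃ n : ℕ, 0 < n ∧ f^[n] (f^[m'] a) = f^[m'] a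

/-- `q` is the orientation-preserving period of the (pre)periodic point `a`. -/
def PrePeriodOf (f : ℂ → ℂ) (a : ℂ) (q : ℕ) : Prop :=
  ∃ m : ℕ, MinPreperiod f a m ∧ OPPeriod f (f^[m] a) q

/-- `a⁺` is hyperbolic with multiplier `lam > 1` (for preperiodic `a`, the multiplier is
taken at the periodic point on the orbit, with sides swapped if the connecting iterate
is orientation-reversing). -/
def SideHypPlus (f : ℂ → ℂ) (a : ℂ) (lam : ℝ) : Prop :=
  1 < lam ∧ ∃ m q : ℕ, MinPreperiod f a m ∧ OPPeriod f (f^[m] a) q ∧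
    ((OrientPresIter f m ∧ HasMultiplierPlus f (f^[m] a) q lam) ∨
     (OrientRevIter f m ∧ HasMultiplierMinus f (f^[m] a) q lam))

/-- `a⁻` is hyperbolic with multiplier `lam > 1`. -/
def SideHypMinus (f : ℂ → ℂ) (a : ℂ) (lam : ℝ) : Prop :=
  1 < lam ∧ ∃ m q : ℕ, MinPreperiod f a m ∧ OPPeriod f (f^[m] a) q ∧
    ((OrientPresIter f m ∧ HasMultiplierMinus f (f^[m] a) q lam) ∨
     (OrientRevIter f m ∧ HasMultiplierPlus f (f^[m] a) q lam))

/-- `a⁺` is parabolic: the one-sided multiplier equals `1` and the relevant periodic point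
is an isolated fixed point of its first return map. -/
def SideParPlus (f : ℂ → ℂ) (a : ℂ) : Prop :=
  ∃ m q : ℕ, MinPreperiod f a m ∧ OPPeriod f (f^[m] a) q ∧
    IsolatedFixedPt f (f^[m] a) q ∧
    ((OrientPresIter f m ∧ HasMultiplierPlus f (f^[m] a) q 1) ∨
     (OrientRevIter f m ∧ HasMultiplierMinus f (f^[m] a) q 1))

/-- `a⁻` is parabolic. -/
def SideParMinus (f : ℂ → ℂ) (a : ℂ) : Prop :=
  ∃ m q : ℕ, MinPreperiod f a m ∧ OPPeriod f (f^[m] a) q ∧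
    IsolatedFixedPt f (f^[m] a) q ∧
    ((OrientPresIter f m ∧ HasMultiplierMinus f (f^[m] a) q 1) ∨
     (OrientRevIter f m ∧ HasMultiplierPlus f (f^[m] a) q 1))

/-- `a⁺` is parabolic with multiplicity data `N(a⁺) = N`. -/
def SideParPlusN (f : ℂ → ℂ) (a : ℂ) (N : ℕ) : Prop :=
  ∃ m q : ℕ, MinPreperiod f a m ∧ OPPeriod f (f^[m] a) q ∧
    IsolatedFixedPt f (f^[m] a) q ∧
    ((OrientPresIter f m ∧ HasMultiplierPlus f (f^[m] a) q 1 ∧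
        TaylorPlus f (f^[m] a) q N) ∨
     (OrientRevIter f m ∧ HasMultiplierMinus f (f^[m] a) q 1 ∧
        TaylorMinus f (f^[m] a) q N))

/-- `a⁻` is parabolic with multiplicity data `N(a⁻) = N`. -/
def SideParMinusN (f : ℂ → ℂ) (a : ℂ) (N : ℕ) : Prop :=
  ∃ m q : ℕ, MinPreperiod f a m ∧ OPPeriod f (f^[m] a) q ∧
    IsolatedFixedPt f (f^[m] a) q ∧
    ((OrientPresIter f m ∧ HasMultiplierMinus f (f^[m] a) q 1 ∧
        TaylorMinus f (f^[m] a) q N) ∨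
     (OrientRevIter f m ∧ HasMultiplierPlus f (f^[m] a) q 1 ∧
        TaylorPlus f (f^[m] a) q N))

/-- `a` is symmetrically hyperbolic: `λ(a⁺) = λ(a⁻) > 1`. -/
def SymmHyperbolic (f : ℂ → ℂ) (a : ℂ) : Prop :=
  ∃ lam : ℝ, SideHypPlus f a lam ∧ SideHypMinus f a lam

/-- `a` is symmetrically parabolic: both sides parabolic with `N(a⁺) = N(a⁻)`. -/
def SymmParabolic (f : ℂ → ℂ) (a : ℂ) : Prop :=
  ∃ N : ℕ, SideParPlusN f a N ∧ SideParMinusN f a N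

/-- The distortion function `ρ_h(z, t)` of a circle homeomorphism `h`. -/
noncomputable def distortionAt (h : ℂ → ℂ) (z : ℂ) (t : ℝ) : ℝ :=
  max (‖h (expMap t * z) - h z‖ / ‖h (expMap (-t) * z) - h z‖)
      (‖h (expMap (-t) * z) - h z‖ / ‖h (expMap t * z) - h z‖)

/-- Condition (H/P→H/P): there is `μ > 0` matching parabolic sides of `a` to parabolic sides
of `b` with `N(a^±) = μ · N(b^±)`, and hyperbolic sides to hyperbolic sides with
`λ(b^±) = λ(a^±)^μ`. -/
def CondHH (f g : ℂ → ℂ) (a b : ℂ) : Prop :=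
  ∃ μ : ℝ, 0 < μ ∧
    (∀ N : ℕ, SideParPlusN f a N → ∃ N' : ℕ, SideParPlusN g b N' ∧ (N : ℝ) = μ * N') ∧
    (∀ N : ℕ, SideParMinusN f a N → ∃ N' : ℕ, SideParMinusN g b N' ∧ (N : ℝ) = μ * N') ∧
    (∀ lam : ℝ, SideHypPlus f a lam → SideHypPlus g b (lam ^ μ)) ∧
    (∀ lam : ℝ, SideHypMinus f a lam → SideHypMinus g b (lam ^ μ))

/-- Condition (H→P): `a⁺` and `a⁻` are hyperbolic and `b` is symmetrically parabolic. -/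
def CondHP (f g : ℂ → ℂ) (a b : ℂ) : Prop :=
  (∃ lam : ℝ, SideHypPlus f a lam) ∧ (∃ lam : ℝ, SideHypMinus f a lam) ∧ SymmParabolic g b

/-- The set `F_n = (f^[n-1])⁻¹({a₀, …, a_r}) ∩ S¹`. -/
def Fset (f : ℂ → ℂ) {r : ℕ} (a : Fin (r + 1) → ℂ) (n : ℕ) : Set ℂ :=
  {z : ℂ | z ∈ S1 ∧ f^[n - 1] z ∈ Set.range a}

/-- `A` is a complementary arc of `F_n`: the closure of a connected component
of `S¹ ∖ F_n`. -/
def IsComplArc (f : ℂ → ℂ) {r : ℕ} (a : Fin (r + 1) → ℂ) (n : ℕ) (A : Set ℂ) : Prop :=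
  ∃ z ∈ S1 \ Fset f a n, A = closure (connectedComponentIn (S1 \ Fset f a n) z)

/-- `φ` has relative distortion bounded by `M` on `X`. -/
def RelDistBdd (φ : ℂ → ℂ) (X : Set ℂ) (M : ℝ) : Prop :=
  ∀ A B : Set ℂ, A ⊆ X → B ⊆ X → 0 < Metric.diam B → 0 < Metric.diam (φ '' B) →
    M⁻¹ * (Metric.diam A / Metric.diam B) ≤ Metric.diam (φ '' A) / Metric.diam (φ '' B) ∧
    Metric.diam (φ '' A) / Metric.diam (φ '' B) ≤ M * (Metric.diam A / Metric.diam B)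

/-- `J` is a Jordan curve in `ℂ`. -/
def JordanCurve (J : Set ℂ) : Prop :=
  ∃ γ : ℂ → ℂ, ContinuousOn γ S1 ∧ Set.InjOn γ S1 ∧ γ '' S1 = J

/-- `J` is a welding curve for the circle homeomorphism `h`. -/
def IsWeldingPair (h : ℂ → ℂ) (J : Set ℂ) : Prop :=
  JordanCurve J ∧
  ∃ U V : Set ℂ, IsOpen U ∧ IsOpen V ∧ IsConnected U ∧ IsConnected V ∧
    Bornology.IsBounded U ∧ ¬ Bornology.IsBounded V ∧ Disjoint U V ∧
    U ∪ V = {z : ℂ | z ∉ J} ∧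
    ∃ H₁ H₂ : ℂ → ℂ,
      ContinuousOn H₁ (Metric.closedBall 0 1) ∧
      Set.InjOn H₁ (Metric.closedBall 0 1) ∧
      DifferentiableOn ℂ H₁ (Metric.ball 0 1) ∧
      H₁ '' Metric.ball 0 1 = U ∧
      H₁ '' Metric.closedBall 0 1 = U ∪ J ∧
      ContinuousOn H₂ {z : ℂ | 1 ≤ ‖z‖} ∧
      Set.InjOn H₂ {z : ℂ | 1 ≤ ‖z‖} ∧
      DifferentiableOn ℂ H₂ {z : ℂ | 1 < ‖z‖} ∧
      H₂ '' {z : ℂ | 1 < ‖z‖} = V ∧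
      H₂ '' {z : ℂ | 1 ≤ ‖z‖} = V ∪ J ∧
      Filter.Tendsto (fun z : ℂ => ‖H₂ z‖)
        (Filter.comap (fun z : ℂ => ‖z‖) Filter.atTop) Filter.atTop ∧
      ∀ z ∈ S1, H₂ (h z) = H₁ z

/-- `h` is a welding homeomorphism. -/
def IsWeldingHomeo (h : ℂ → ℂ) : Prop := ∃ J : Set ℂ, IsWeldingPair h J

/-- `J'` is the image of `J` under a Möbius transformation (whose pole avoids `J`). -/
def MoebiusEquivCurves (J J' : Set ℂ) : Prop :=
  ∃ p q u v : ℂ, p * v - q * u ≠ 0 ∧ (∀ z ∈ J, u * z + v ≠ 0) ∧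
    J' = (fun z : ℂ => (p * z + q) / (u * z + v)) '' J

/-- The inversion (anti-conformal reflection) in the circle with center `c` and radius `ρ`. -/
noncomputable def circleInv (c : ℂ) (ρ : ℝ) (z : ℂ) : ℂ :=
  c + (ρ : ℂ) ^ 2 / ((starRingEnd ℂ) z - (starRingEnd ℂ) c)

end

/-!
Lift to `ℝ` along `expMap`. Expansivity forces a continuous lift `F` of `f` to be injective. The
complementary arcs of `F_{j+1}` are the images of the gaps of `Λ_j = (F^[j])⁻¹ Λ_0`, where `Λ_0`
is the (closed, locally finite) lift of the partition points, and the arcs of `F_{n+q}` inside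
the arc over a gap `(α, β)` of `Λ_{n-1}` correspond to the points of `Λ_{n-1+q}` in `(α, β]`.
The map `F^[n-1]` carries `(α, β)` onto a gap of `Λ_0`, so it suffices to count the points of
`Λ_q` inside a gap of `Λ_0`.

Upper bound: `f` is injective on partition arcs, so `F` maps a gap of `Λ_0` onto an interval of
length at most `1`, which contains at most `r` points of `Λ_0`; by induction a gap of `Λ_0`
contains at most `(r+1)^q - 1` points of `Λ_q`. Lower bound: if a gap of `Λ_0` with the periodic
endpoint contained no point of `Λ_q`, the increasing lift of `f^[q]` fixing that endpoint would
map the closed gap into itself; two distinct points with forever close orbits then contradict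
expansivity.
-/

open Function Real

lemma expMap_eq_exp (x : ℝ) : expMap x = Complex.exp (↑(2 * π * x) * Complex.I) := by
  unfold expMap; push_cast; ring_nf

lemma norm_expMap (x : ℝ) : ‖expMap x‖ = 1 := by
  rw [expMap_eq_exp, Complex.norm_exp_ofReal_mul_I]

lemma expMap_mem_S1 (x : ℝ) : expMap x ∈ S1 := norm_expMap x

lemma continuous_expMap : Continuous expMap := by
  unfold expMap; fun_prop

lemma expMap_add (x y : ℝ) : expMap (x + y) = expMap x * expMap y := by
  simp only [expMap, ← Complex.exp_add]; push_cast; ring_nf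

lemma expMap_eq_iff {x y : ℝ} : expMap x = expMap y ↔ ∃ k : ℤ, x = y + k := by
  have h2πI : 2 * (π : ℂ) * Complex.I ≠ 0 := by simp [Real.pi_ne_zero]
  simp only [expMap, Complex.exp_eq_exp_iff_exists_int]
  refine exists_congr fun k => ⟨fun h => ?_, fun h => by rw [h]; push_cast; ring⟩
  exact_mod_cast mul_left_cancel₀ h2πI (h.trans (by ring) : _ = 2 * (π : ℂ) * Complex.I * (y + k))

lemma expMap_add_intCast (x : ℝ) (k : ℤ) : expMap (x + k) = expMap x :=
  expMap_eq_iff.mpr ⟨k, rfl⟩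

lemma expMap_toIocMod (c x : ℝ) : expMap (toIocMod one_pos c x) = expMap x := by
  rw [toIocMod, zsmul_one, sub_eq_add_neg, ← Int.cast_neg, expMap_add_intCast]

lemma injOn_expMap_Ico (c : ℝ) : InjOn expMap (Ico c (c + 1)) := by
  intro x hx y hy hxy
  obtain ⟨k, hk⟩ := expMap_eq_iff.mp hxy
  have h1 : (k : ℝ) < 1 := by linarith [hx.2, hy.1]
  have h2 : (-1 : ℝ) < k := by linarith [hx.1, hy.2]
  obtain rfl : k = 0 := by
    have : k < 1 := by exact_mod_cast h1
    have : -1 < k := by exact_mod_cast h2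
    omega
  simpa using hk

lemma expMap_ne_of_lt {x y : ℝ} (hxy : x < y) (hyx : y < x + 1) : expMap x ≠ expMap y :=
  fun h => hxy.ne (injOn_expMap_Ico x ⟨le_rfl, by linarith⟩ ⟨hxy.le, hyx⟩ h)

lemma exists_expMap_eq_of_mem_S1 {z : ℂ} (hz : z ∈ S1) : ∃ x : ℝ, expMap x = z := by
  refine ⟨Complex.arg z / (2 * π), ?_⟩
  rw [expMap_eq_exp, show 2 * π * (Complex.arg z / (2 * π)) = Complex.arg z by
    field_simp]
  simpa [show ‖z‖ = 1 from hz] using Complex.norm_mul_exp_arg_mul_I z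

lemma norm_expMap_sub_le (x y : ℝ) : ‖expMap x - expMap y‖ ≤ 2 * π * |x - y| := by
  have h := Real.norm_exp_I_mul_ofReal_sub_one_le (x := 2 * π * (x - y))
  rw [show expMap x - expMap y = expMap y * (expMap (x - y) - 1) by
    rw [mul_sub, ← expMap_add]; ring_nf, norm_mul, norm_expMap, one_mul, expMap_eq_exp, mul_comm]
  simpa [abs_mul, abs_of_pos Real.pi_pos] using h

section Lift

variable {f : ℂ → ℂ} {F : ℝ → ℝ}

lemma exists_intCast_eq_add_of_expMap_eq {H₁ H₂ : ℝ → ℝ} (h₁ : Continuous H₁)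
    (h₂ : Continuous H₂) (h : ∀ x, expMap (H₁ x) = expMap (H₂ x)) :
    ∃ k : ℤ, ∀ x, H₁ x = H₂ x + k := by
  have hint : MapsTo (fun x => H₁ x - H₂ x) univ (range ((↑) : ℤ → ℝ)) := fun x _ => by
    obtain ⟨k, hk⟩ := expMap_eq_iff.mp (h x)
    exact ⟨k, by simp [hk]⟩
  obtain ⟨k, hk⟩ := hint (mem_univ 0)
  refine ⟨k, fun x => ?_⟩
  have := isPreconnected_univ.constant_of_mapsTo
    Int.isClosedEmbedding_coe_real.isInducing.isDiscrete_range (h₁.sub h₂).continuousOn hint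
    (mem_univ x) (mem_univ 0)
  simp only [Pi.sub_apply] at this hk
  linarith

/-- At time `0` expansivity separates nearby points, while from time `1` on, points with equal
`F`-values have equal orbits. -/
lemma exists_pos_forall_injOn_Icc (hexp : ExpansiveOn f) (hF : Semiconj expMap F f) :
    ∃ η > 0, ∀ t, InjOn F (Icc t (t + η)) := by
  obtain ⟨δ, hδ, hsep⟩ := hexp
  refine ⟨min (δ / (4 * π)) (1 / 2), by positivity, fun t x hx y hy hFxy => ?_⟩
  by_contra hne
  have hxy : |x - y| ≤ min (δ / (4 * π)) (1 / 2) := by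
    rw [abs_le]; constructor <;> linarith [hx.1, hx.2, hy.1, hy.2]
  have hexp_ne : expMap x ≠ expMap y := by
    have h1 := (hxy.trans (min_le_right _ _))
    rw [abs_le] at h1
    rcases lt_or_gt_of_ne hne with h | h
    exacts [expMap_ne_of_lt h (by linarith), (expMap_ne_of_lt h (by linarith)).symm]
  obtain ⟨n, hn⟩ := hsep _ (expMap_mem_S1 x) _ (expMap_mem_S1 y) hexp_ne
  cases n with
  | zero =>
    have h2 : 2 * π * |x - y| ≤ δ / 2 := by
      calc 2 * π * |x - y| ≤ 2 * π * (δ / (4 * π)) := by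
            gcongr; exact hxy.trans (min_le_left _ _)
        _ = δ / 2 := by field_simp; ring
    simp only [iterate_zero, id_eq] at hn
    linarith [norm_expMap_sub_le x y]
  | succ n =>
    rw [← hF.iterate_right _ x, ← hF.iterate_right _ y, iterate_succ_apply, iterate_succ_apply,
      hFxy, sub_self, norm_zero] at hn
    linarith

/-- The windows `[x, x + L]` and `[y - L, y]` overlap, so `F` is strictly monotone, or strictly
antitone, on both. -/
lemma injOn_Icc_three_halves (hFc : Continuous F) {L : ℝ} (hL : 0 < L)
    (h : ∀ t, InjOn F (Icc t (t + L))) (t : ℝ) : InjOn F (Icc t (t + 3 * L / 2)) := by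
  suffices key : ∀ x ∈ Icc t (t + 3 * L / 2), ∀ y ∈ Icc t (t + 3 * L / 2), x < y → F x ≠ F y by
    intro x hx y hy hFxy
    by_contra hne
    rcases lt_or_gt_of_ne hne with hlt | hlt
    exacts [key x hx y hy hlt hFxy, key y hy x hx hlt hFxy.symm]
  intro x hx y hy hxy hFxy
  rcases le_or_gt (y - x) L with hshort | hlong
  · exact hxy.ne (h x ⟨le_rfl, by linarith⟩ ⟨hxy.le, by linarith⟩ hFxy)
  have hx₁ : x ∈ Icc x (x + L) := ⟨le_rfl, by linarith⟩
  have hu₁ : y - L ∈ Icc x (x + L) := ⟨by linarith, by linarith [hx.1, hy.2]⟩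
  have hv₁ : x + L ∈ Icc x (x + L) := ⟨by linarith, le_rfl⟩
  have hu₂ : y - L ∈ Icc (y - L) (y - L + L) := ⟨le_rfl, by linarith⟩
  have hv₂ : x + L ∈ Icc (y - L) (y - L + L) := ⟨by linarith [hx.1, hy.2], by linarith⟩
  have hy₂ : y ∈ Icc (y - L) (y - L + L) := ⟨by linarith, by linarith⟩
  have huv : y - L < x + L := by linarith [hx.1, hy.2]
  rcases hFc.continuousOn.strictMonoOn_of_injOn_Icc' (by linarith) (h x) with h₁ | h₁ <;>
    rcases hFc.continuousOn.strictMonoOn_of_injOn_Icc' (by linarith) (h (y - L)) with h₂ | h₂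
  · linarith [h₁ hx₁ hu₁ (by linarith), h₂ hu₂ hy₂ (by linarith)]
  · linarith [h₁ hu₁ hv₁ huv, h₂ hu₂ hv₂ huv]
  · linarith [h₁ hu₁ hv₁ huv, h₂ hu₂ hv₂ huv]
  · linarith [h₁ hx₁ hu₁ (by linarith), h₂ hu₂ hy₂ (by linarith)]

lemma injective_of_forall_injOn_Icc (hFc : Continuous F) {η : ℝ} (hη : 0 < η)
    (h : ∀ t, InjOn F (Icc t (t + η))) : Injective F := by
  have hpow : ∀ k : ℕ, ∀ t, InjOn F (Icc t (t + η * (3 / 2) ^ k)) := by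
    intro k
    induction k with
    | zero => simpa using h
    | succ k ih =>
      intro t
      convert injOn_Icc_three_halves hFc (by positivity) ih t using 3
      ring
  intro x y hxy
  wlog hle : x ≤ y generalizing x y
  · exact (this hxy.symm (le_of_not_ge hle)).symm
  obtain ⟨k, hk⟩ := pow_unbounded_of_one_lt ((y - x) / η) (by norm_num : (1 : ℝ) < 3 / 2)
  rw [div_lt_iff₀ hη] at hk
  exact hpow k x ⟨le_rfl, by linarith⟩ ⟨hle, by linarith⟩ hxy

theorem injective_lift_of_expansiveOn (hexp : ExpansiveOn f) (hFc : Continuous F)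
    (hF : Semiconj expMap F f) : Injective F :=
  let ⟨_, hη, hinj⟩ := exists_pos_forall_injOn_Icc hexp hF
  injective_of_forall_injOn_Icc hFc hη hinj

lemma strictMono_iterate_of_orientPresIter (hFc : Continuous F) (hFi : Injective F)
    (hF : Semiconj expMap F f) {q : ℕ} (hq : OrientPresIter f q) : StrictMono F^[q] := by
  obtain ⟨e, he, G, hGc, hGf, hG1⟩ := hq
  obtain ⟨k, hk⟩ := exists_intCast_eq_add_of_expMap_eq hGc (hFc.iterate q) fun x =>
    (hGf x).symm.trans (hF.iterate_right q x).symm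
  refine ((hFc.iterate q).strictMono_of_inj (hFi.iterate q)).resolve_right fun hanti => ?_
  have h01 := hanti (zero_lt_one' ℝ)
  have he' : (0 : ℝ) < e := by exact_mod_cast he
  have := hG1 0
  rw [hk, hk, zero_add] at this
  linarith

end Lift

section Gap

def IsGap (Λ : Set ℝ) (α β : ℝ) : Prop := α ∈ Λ ∧ β ∈ Λ ∧ α < β ∧ Disjoint (Ioo α β) Λ

variable {Λ : Set ℝ} {α β γ γ' t : ℝ}

lemma exists_isGap_of_notMem (hΛ : IsClosed Λ) {a b : ℝ} (ha : a ∈ Λ) (hb : b ∈ Λ)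
    (hat : a ≤ t) (htb : t ≤ b) (ht : t ∉ Λ) : ∃ α β, IsGap Λ α β ∧ t ∈ Ioo α β := by
  have hbdd₁ : BddAbove (Λ ∩ Icc a t) := bddAbove_Icc.mono inter_subset_right
  have hbdd₂ : BddBelow (Λ ∩ Icc t b) := bddBelow_Icc.mono inter_subset_right
  have hne₁ : (Λ ∩ Icc a t).Nonempty := ⟨a, ha, le_rfl, hat⟩
  obtain ⟨hαΛ, hαt⟩ := (hΛ.inter isClosed_Icc).csSup_mem hne₁ hbdd₁
  obtain ⟨hβΛ, hβt⟩ := (hΛ.inter isClosed_Icc).csInf_mem ⟨b, hb, htb, le_rfl⟩ hbdd₂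
  have hαt' : sSup (Λ ∩ Icc a t) < t := hαt.2.lt_of_ne fun h => ht (h ▸ hαΛ)
  have htβ' : t < sInf (Λ ∩ Icc t b) := hβt.1.lt_of_ne fun h => ht (h ▸ hβΛ)
  refine ⟨_, _, ⟨hαΛ, hβΛ, hαt'.trans htβ', disjoint_left.2 fun w hw hwΛ => ?_⟩, hαt', htβ'⟩
  rcases le_total w t with hwt | htw
  · have hαw : a ≤ w := (le_csSup hbdd₁ ⟨ha, le_rfl, hat⟩).trans hw.1.le
    exact hw.1.not_ge (le_csSup hbdd₁ ⟨hwΛ, hαw, hwt⟩)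
  · exact hw.2.not_ge (csInf_le hbdd₂ ⟨hwΛ, htw, hw.2.le.trans hβt.2⟩)

lemma IsGap.le_left_of_mem (h : IsGap Λ γ γ') (ht : t ∈ Ioo γ γ') (hα : α ∈ Λ) (hαt : α < t) :
    α ≤ γ :=
  not_lt.1 fun hγα => disjoint_left.1 h.2.2.2 ⟨hγα, hαt.trans ht.2⟩ hα

lemma IsGap.right_le_of_mem (h : IsGap Λ γ γ') (ht : t ∈ Ioo γ γ') (hβ : β ∈ Λ) (htβ : t < β) :
    γ' ≤ β :=
  not_lt.1 fun hβγ' => disjoint_left.1 h.2.2.2 ⟨ht.1.trans htβ, hβγ'⟩ hβ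

noncomputable def leftNeighbor (Λ : Set ℝ) (α v : ℝ) : ℝ := sSup (Λ ∩ Ico α v)

lemma isGap_leftNeighbor {v : ℝ} (hfin : (Λ ∩ Icc α v).Finite) (hα : α ∈ Λ) (hv : v ∈ Λ)
    (hαv : α < v) : IsGap Λ (leftNeighbor Λ α v) v ∧ α ≤ leftNeighbor Λ α v := by
  have hfin' := hfin.subset (inter_subset_inter_right _ Ico_subset_Icc_self)
  obtain ⟨hmΛ, hαm, hmv⟩ :=
    (show (Λ ∩ Ico α v).Nonempty from ⟨α, hα, le_rfl, hαv⟩).csSup_mem hfin'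
  refine ⟨⟨hmΛ, hv, hmv, disjoint_left.2 fun w hw hwΛ => hw.1.not_ge ?_⟩, hαm⟩
  exact le_csSup hfin'.bddAbove ⟨hwΛ, hαm.trans hw.1.le, hw.2⟩

lemma IsGap.leftNeighbor_eq (h : IsGap Λ γ γ') (hαγ : α ≤ γ) : leftNeighbor Λ α γ' = γ :=
  IsGreatest.csSup_eq ⟨⟨h.1, hαγ, h.2.2.1⟩, fun _ hw =>
    not_lt.1 fun hγw => disjoint_left.1 h.2.2.2 ⟨hγw, hw.2.2⟩ hw.1⟩

end Gap

section ComplementaryArc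

variable {K : Set ℂ} {α β γ γ' t : ℝ}

lemma S1_subset_image_Icc_union_image_Icc (α β : ℝ) :
    S1 ⊆ expMap '' Icc α β ∪ expMap '' Icc β (α + 1) := fun z hz => by
  obtain ⟨s, rfl⟩ := exists_expMap_eq_of_mem_S1 hz
  obtain ⟨h₁, h₂⟩ := toIocMod_mem_Ioc one_pos α s
  rw [← expMap_toIocMod α s]
  rcases le_total (toIocMod one_pos α s) β with h | h
  exacts [Or.inl ⟨_, ⟨h₁.le, h⟩, rfl⟩, Or.inr ⟨_, ⟨h, h₂⟩, rfl⟩]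

lemma image_Icc_inter_image_Icc_subset (α β : ℝ) :
    expMap '' Icc α β ∩ expMap '' Icc β (α + 1) ⊆ {expMap α, expMap β} := by
  rintro _ ⟨⟨s, hs, rfl⟩, ⟨s', hs', hss'⟩⟩
  rcases hs.1.eq_or_lt with rfl | hαs
  · exact .inl rfl
  rcases hs.2.eq_or_lt with rfl | hsβ
  · exact .inr rfl
  exact absurd hss' (expMap_ne_of_lt (hsβ.trans_le hs'.1) (by linarith [hs'.2])).symm

lemma connectedComponentIn_eq_image_Ioo (h : IsGap (expMap ⁻¹' K) α β) (ht : t ∈ Ioo α β) :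
    connectedComponentIn (S1 \ K) (expMap t) = expMap '' Ioo α β := by
  obtain ⟨hα, hβ, -, hdisj⟩ := h
  have hsub : expMap '' Ioo α β ⊆ S1 \ K := by
    rintro _ ⟨s, hs, rfl⟩; exact ⟨expMap_mem_S1 s, disjoint_left.1 hdisj hs⟩
  have hconn : IsPreconnected (expMap '' Ioo α β) :=
    isPreconnected_Ioo.image _ continuous_expMap.continuousOn
  refine subset_antisymm ?_ (hconn.subset_connectedComponentIn ⟨t, ht, rfl⟩ hsub)
  -- The closed arcs `expMap '' [α, β]` and `expMap '' [β, α + 1]` cover the circle and meet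
  -- only in points of `K`, so the component lies in one of them.
  have hinter : expMap '' Icc α β ∩ expMap '' Icc β (α + 1) ⊆ K :=
    (image_Icc_inter_image_Icc_subset α β).trans (insert_subset hα (singleton_subset_iff.2 hβ))
  have hC := connectedComponentIn_subset (S1 \ K) (expMap t)
  have htC : expMap t ∈ connectedComponentIn (S1 \ K) (expMap t) :=
    mem_connectedComponentIn (hsub ⟨t, ht, rfl⟩)
  have hClosed : ∀ c d : ℝ, IsClosed (expMap '' Icc c d) := fun c d =>
    (isCompact_Icc.image continuous_expMap).isClosed
  rcases isPreconnected_iff_subset_of_disjoint_closed.1 isPreconnected_connectedComponentIn _ _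
    (hClosed α β) (hClosed β (α + 1))
    (fun z hz => S1_subset_image_Icc_union_image_Icc α β (hC hz).1)
    (eq_empty_of_forall_notMem fun z hz => (hC hz.1).2 (hinter hz.2)) with hCl | hD
  · rintro z hz
    obtain ⟨s, hs, rfl⟩ := hCl hz
    refine ⟨s, ⟨hs.1.lt_of_ne ?_, hs.2.lt_of_ne ?_⟩, rfl⟩ <;> rintro rfl
    exacts [(hC hz).2 hα, (hC hz).2 hβ]
  · exact absurd (hinter ⟨⟨t, Ioo_subset_Icc_self ht, rfl⟩, hD htC⟩) (hC htC).2

lemma closure_expMap_image_Ioo (h : α < β) :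
    closure (expMap '' Ioo α β) = expMap '' Icc α β := by
  refine subset_antisymm (closure_minimal (image_mono Ioo_subset_Icc_self)
    (isCompact_Icc.image continuous_expMap).isClosed) ?_
  rw [← closure_Ioo h.ne]
  exact image_closure_subset_closure_image continuous_expMap

lemma exists_eq_closure_connectedComponentIn_iff_isGap (hK : IsClosed (expMap ⁻¹' K))
    (hne : (expMap ⁻¹' K).Nonempty) {B : Set ℂ} :
    (∃ z ∈ S1 \ K, B = closure (connectedComponentIn (S1 \ K) z)) ↔
      ∃ γ γ', IsGap (expMap ⁻¹' K) γ γ' ∧ B = expMap '' Icc γ γ' := by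
  constructor
  · rintro ⟨z, ⟨hzS, hzK⟩, rfl⟩
    obtain ⟨t, rfl⟩ := exists_expMap_eq_of_mem_S1 hzS
    obtain ⟨s, hs⟩ := hne
    obtain ⟨h₁, h₂⟩ := toIocMod_mem_Ioc one_pos (t - 1) s
    have hs' : toIocMod one_pos (t - 1) s ∈ expMap ⁻¹' K := by
      rwa [mem_preimage, expMap_toIocMod]
    have hs'' : toIocMod one_pos (t - 1) s + (1 : ℤ) ∈ expMap ⁻¹' K := by
      rwa [mem_preimage, expMap_add_intCast]
    obtain ⟨γ, γ', hgap, ht⟩ := exists_isGap_of_notMem hK hs' hs'' (by linarith)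
      (by push_cast; linarith) hzK
    exact ⟨γ, γ', hgap, by
      rw [connectedComponentIn_eq_image_Ioo hgap ht, closure_expMap_image_Ioo hgap.2.2.1]⟩
  · rintro ⟨γ, γ', hgap, rfl⟩
    have hmid : (γ + γ') / 2 ∈ Ioo γ γ' := ⟨by linarith [hgap.2.2.1], by linarith [hgap.2.2.1]⟩
    refine ⟨expMap ((γ + γ') / 2), ⟨expMap_mem_S1 _, disjoint_left.1 hgap.2.2.2 hmid⟩, ?_⟩
    rw [connectedComponentIn_eq_image_Ioo hgap hmid, closure_expMap_image_Ioo hgap.2.2.1]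

lemma image_expMap_Icc_add_intCast (c d : ℝ) (k : ℤ) :
    expMap '' Icc (c + k) (d + k) = expMap '' Icc c d := by
  rw [← image_add_const_Icc, image_image]
  simp only [expMap_add_intCast]

lemma IsGap.add_intCast (h : IsGap (expMap ⁻¹' K) γ γ') (k : ℤ) :
    IsGap (expMap ⁻¹' K) (γ + k) (γ' + k) := by
  obtain ⟨hγ, hγ', hlt, hdisj⟩ := h
  have hshift : ∀ s : ℝ, s + k ∈ expMap ⁻¹' K ↔ s ∈ expMap ⁻¹' K := fun s => by
    rw [mem_preimage, mem_preimage, expMap_add_intCast]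
  refine ⟨(hshift γ).2 hγ, (hshift γ').2 hγ', by linarith, disjoint_left.2 fun w hw hwK => ?_⟩
  have hw' : w - k ∈ Ioo γ γ' := ⟨by linarith [hw.1], by linarith [hw.2]⟩
  exact disjoint_left.1 hdisj hw' ((hshift _).1 (by rwa [sub_add_cancel]))

variable (K) in
/-- The arc over the gap of the lift of `K` that ends at `v`, when `α ∈ expMap ⁻¹' K` lies
below `v`. -/
noncomputable def gapArc (α v : ℝ) : Set ℂ := expMap '' Icc (leftNeighbor (expMap ⁻¹' K) α v) v

lemma setOf_gapArc_subset_eq (hfin : ∀ c d, (expMap ⁻¹' K ∩ Icc c d).Finite)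
    (hα : α ∈ expMap ⁻¹' K) (hβ : β ∈ expMap ⁻¹' K) :
    {B | (∃ γ γ', IsGap (expMap ⁻¹' K) γ γ' ∧ B = expMap '' Icc γ γ') ∧
      B ⊆ expMap '' Icc α β} = gapArc K α '' (expMap ⁻¹' K ∩ Ioc α β) := by
  ext B
  constructor
  · -- shift the gap by an integer so that its midpoint lies in `[α, β]`
    rintro ⟨⟨γ, γ', hgap, rfl⟩, hB⟩
    have hmid : (γ + γ') / 2 ∈ Ioo γ γ' := ⟨by linarith [hgap.2.2.1], by linarith [hgap.2.2.1]⟩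
    obtain ⟨s, hs, hsm⟩ := hB ⟨_, Ioo_subset_Icc_self hmid, rfl⟩
    obtain ⟨k, hk⟩ := expMap_eq_iff.1 hsm
    have hgapk := hgap.add_intCast k
    have hsk : s ∈ Ioo (γ + k) (γ' + k) := by
      rw [hk]; exact ⟨by linarith [hmid.1], by linarith [hmid.2]⟩
    have hsK : s ∉ expMap ⁻¹' K := disjoint_left.1 hgapk.2.2.2 hsk
    have hαs : α < s := hs.1.lt_of_ne fun h => hsK (h ▸ hα)
    have hsβ : s < β := hs.2.lt_of_ne fun h => hsK (h ▸ hβ)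
    have hαγ := hgapk.le_left_of_mem hsk hα hαs
    refine ⟨γ' + k, ⟨hgapk.2.1, hαs.trans hsk.2, hgapk.right_le_of_mem hsk hβ hsβ⟩, ?_⟩
    rw [gapArc, hgapk.leftNeighbor_eq hαγ, image_expMap_Icc_add_intCast]
  · rintro ⟨v, ⟨hv, hαv, hvβ⟩, rfl⟩
    obtain ⟨hgap, hαl⟩ := isGap_leftNeighbor (hfin α v) hα hv hαv
    exact ⟨⟨_, _, hgap, rfl⟩, image_mono (Icc_subset_Icc hαl hvβ)⟩

lemma injOn_gapArc (hfin : ∀ c d, (expMap ⁻¹' K ∩ Icc c d).Finite) (hα : α ∈ expMap ⁻¹' K)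
    (hβα : β < α + 1) : InjOn (gapArc K α) (expMap ⁻¹' K ∩ Ioc α β) := by
  rintro v ⟨hv, hαv, hvβ⟩ v' ⟨hv', hαv', hv'β⟩ hvv'
  have hsub : ∀ w ∈ expMap ⁻¹' K, α < w → w ≤ β →
      Icc (leftNeighbor (expMap ⁻¹' K) α w) w ⊆ Icc α β := fun w hw hαw hwβ =>
    Icc_subset_Icc (isGap_leftNeighbor (hfin α w) hα hw hαw).2 hwβ
  have hinj : InjOn expMap (Icc α β) := (injOn_expMap_Ico α).mono (Icc_subset_Ico_right hβα)
  have := (hinj.image_eq_image_iff (hsub v hv hαv hvβ) (hsub v' hv' hαv' hv'β)).1 hvv'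
  exact ((Icc_eq_Icc_iff (isGap_leftNeighbor (hfin α v) hα hv hαv).1.2.2.1.le).1 this).2

lemma ncard_setOf_gapArc_subset (hfin : ∀ c d, (expMap ⁻¹' K ∩ Icc c d).Finite)
    (hα : α ∈ expMap ⁻¹' K) (hβ : β ∈ expMap ⁻¹' K) (hαβ : α < β) (hβα : β < α + 1) :
    {B | (∃ γ γ', IsGap (expMap ⁻¹' K) γ γ' ∧ B = expMap '' Icc γ γ') ∧
      B ⊆ expMap '' Icc α β}.Finite ∧
    {B | (∃ γ γ', IsGap (expMap ⁻¹' K) γ γ' ∧ B = expMap '' Icc γ γ') ∧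
      B ⊆ expMap '' Icc α β}.ncard = (expMap ⁻¹' K ∩ Ioo α β).ncard + 1 := by
  have hIoc : expMap ⁻¹' K ∩ Ioc α β = insert β (expMap ⁻¹' K ∩ Ioo α β) := by
    rw [← Ioo_insert_right hαβ, inter_insert_of_mem hβ]
  have hIocfin : (expMap ⁻¹' K ∩ Ioc α β).Finite :=
    (hfin α β).subset (inter_subset_inter_right _ Ioc_subset_Icc_self)
  rw [setOf_gapArc_subset_eq hfin hα hβ]
  refine ⟨hIocfin.image _, ?_⟩
  rw [(injOn_gapArc hfin hα hβα).ncard_image, hIoc, ncard_insert_of_notMem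
    (fun h => lt_irrefl β h.2.2)
    ((hfin α β).subset (inter_subset_inter_right _ Ioo_subset_Icc_self))]

end ComplementaryArc

section Transport

variable {H : ℝ → ℝ} {Λ : Set ℝ} {α β : ℝ}

lemma image_Ioo_of_injective (hc : Continuous H) (hi : Injective H) (h : α ≤ β) :
    H '' Ioo α β = Ioo (min (H α) (H β)) (max (H α) (H β)) := by
  rcases hc.strictMono_of_inj hi with hm | hm
  · rw [hc.image_Ioo_of_strictMono hm, min_eq_left (hm.monotone h), max_eq_right (hm.monotone h)]
  · rw [hc.continuousOn.image_Ioo_of_strictAntiOn h (hm.strictAntiOn _),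
      min_eq_right (hm.antitone h), max_eq_left (hm.antitone h)]

lemma IsGap.image (hc : Continuous H) (hi : Injective H) (h : IsGap (H ⁻¹' Λ) α β) :
    IsGap Λ (min (H α) (H β)) (max (H α) (H β)) := by
  obtain ⟨hα, hβ, hαβ, hdisj⟩ := h
  refine ⟨?_, ?_, min_lt_max.2 (hi.ne hαβ.ne), ?_⟩
  · rcases min_choice (H α) (H β) with h | h <;> rw [h]; exacts [hα, hβ]
  · rcases max_choice (H α) (H β) with h | h <;> rw [h]; exacts [hα, hβ]
  rw [← image_Ioo_of_injective hc hi hαβ.le]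
  exact disjoint_left.2 (by rintro _ ⟨w, hw, rfl⟩ hwΛ; exact disjoint_left.1 hdisj hw hwΛ)

lemma ncard_preimage_inter_Ioo (hc : Continuous H) (hi : Injective H) (h : α ≤ β) (Λ : Set ℝ) :
    (H ⁻¹' Λ ∩ Ioo α β).ncard = (Λ ∩ Ioo (min (H α) (H β)) (max (H α) (H β))).ncard := by
  rw [← image_Ioo_of_injective hc hi h, ← image_preimage_inter, ncard_image_of_injective _ hi]

end Transport

lemma ncard_inter_Ioo_le_of_mem {Q : Set ℝ} (hQ : ∀ c d, (Q ∩ Ioo c d).Finite) (c p d : ℝ) :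
    (Q ∩ Ioo c d).ncard ≤ (Q ∩ Ioo c p).ncard + (Q ∩ Ioo p d).ncard + 1 := by
  have hsplit : Q ∩ Ioo c d ⊆ insert p ((Q ∩ Ioo c p) ∪ (Q ∩ Ioo p d)) := by
    rintro w ⟨hw, hwc, hwd⟩
    rcases lt_trichotomy w p with h | rfl | h
    exacts [Or.inr (Or.inl ⟨hw, hwc, h⟩), Or.inl rfl, Or.inr (Or.inr ⟨hw, h, hwd⟩)]
  calc (Q ∩ Ioo c d).ncard ≤ (insert p ((Q ∩ Ioo c p) ∪ (Q ∩ Ioo p d))).ncard :=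
        ncard_le_ncard hsplit (((hQ c p).union (hQ p d)).insert p)
    _ ≤ _ := (ncard_insert_le _ _).trans (Nat.add_le_add_right (ncard_union_le _ _) 1)

lemma add_ncard_inter_Ioo_lt {P : Set ℝ} (hP : ∀ c d, (P ∩ Ioo c d).Finite) {c p d : ℝ}
    (hp : p ∈ P ∩ Ioo c d) :
    (P ∩ Ioo c p).ncard + (P ∩ Ioo p d).ncard < (P ∩ Ioo c d).ncard := by
  have hdisj : Disjoint (P ∩ Ioo c p) (P ∩ Ioo p d) :=
    disjoint_left.2 fun w hw hw' => lt_asymm hw.2.2 hw'.2.1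
  have hp' : p ∉ (P ∩ Ioo c p) ∪ (P ∩ Ioo p d) := by
    rintro (⟨-, h⟩ | ⟨-, h⟩); exacts [lt_irrefl p h.2, lt_irrefl p h.1]
  rw [← ncard_union_eq hdisj (hP c p) (hP p d), Nat.lt_iff_add_one_le,
    ← ncard_insert_of_notMem hp' ((hP c p).union (hP p d))]
  refine ncard_le_ncard ?_ (hP c d)
  rintro w (rfl | ⟨hw, hwc, hwp⟩ | ⟨hw, hwp, hwd⟩)
  exacts [hp, ⟨hw, hwc, hwp.trans hp.2.2⟩, ⟨hw, hp.2.1.trans hwp, hwd⟩]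

/-- Counting points of `Q` gap by gap of `P`: an interval between two points of `P` that
contains `j` further points of `P` consists of `j + 1` gaps of `P`. -/
lemma ncard_inter_Ioo_add_one_le {P Q : Set ℝ} {N : ℕ} (hP : ∀ c d, (P ∩ Ioo c d).Finite)
    (hQ : ∀ c d, (Q ∩ Ioo c d).Finite) (hgap : ∀ u v, IsGap P u v → (Q ∩ Ioo u v).ncard + 1 ≤ N)
    {c d : ℝ} (hc : c ∈ P) (hd : d ∈ P) (hcd : c < d) :
    (Q ∩ Ioo c d).ncard + 1 ≤ ((P ∩ Ioo c d).ncard + 1) * N := by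
  obtain ⟨n, hn⟩ : ∃ n, (P ∩ Ioo c d).ncard = n := ⟨_, rfl⟩
  rw [hn]
  induction n using Nat.strong_induction_on generalizing c d with
  | _ n ih =>
  rcases (P ∩ Ioo c d).eq_empty_or_nonempty with hemp | ⟨p, hp⟩
  · obtain rfl : n = 0 := by rw [← hn, hemp, ncard_empty]
    simpa using hgap c d ⟨hc, hd, hcd, by rwa [disjoint_iff_inter_eq_empty, inter_comm]⟩
  have hlt := add_ncard_inter_Ioo_lt hP hp
  calc (Q ∩ Ioo c d).ncard + 1
      ≤ ((Q ∩ Ioo c p).ncard + 1) + ((Q ∩ Ioo p d).ncard + 1) := by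
        linarith [ncard_inter_Ioo_le_of_mem hQ c p d]
    _ ≤ ((P ∩ Ioo c p).ncard + 1) * N + ((P ∩ Ioo p d).ncard + 1) * N :=
        add_le_add (ih _ (by omega) hc hp.1 hp.2.1 rfl) (ih _ (by omega) hp.1 hd hp.2.2 rfl)
    _ ≤ (n + 1) * N := by rw [← add_mul]; exact Nat.mul_le_mul_right N (by omega)

section MarkovLift

variable {f : ℂ → ℂ} {F : ℝ → ℝ} {r : ℕ} {a : Fin (r + 1) → ℂ} {α β u v : ℝ}

/-- The lift of `F_{j + 1}` (note the index shift, see `preimage_expMap_Fset`). -/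
def liftFset (F : ℝ → ℝ) (a : Fin (r + 1) → ℂ) (j : ℕ) : Set ℝ :=
  F^[j] ⁻¹' (expMap ⁻¹' range a)

lemma mem_liftFset_zero {t : ℝ} : t ∈ liftFset F a 0 ↔ expMap t ∈ range a := Iff.rfl

lemma liftFset_add (i j : ℕ) : liftFset F a (i + j) = F^[j] ⁻¹' liftFset F a i := by
  rw [liftFset, liftFset, iterate_add, preimage_comp]

lemma preimage_expMap_Fset (hF : Semiconj expMap F f) (j : ℕ) :
    expMap ⁻¹' Fset f a (j + 1) = liftFset F a j := by
  ext t
  simp [Fset, liftFset, expMap_mem_S1, ← hF.iterate_right j t]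

lemma mapsTo_range_of_markovPartition (hM : MarkovPartition f r a) :
    MapsTo f (range a) (range a) := by
  rintro _ ⟨k, rfl⟩
  obtain ⟨j, hj⟩ := hM.invariant k
  exact ⟨j, hj.symm⟩

lemma liftFset_zero_subset (hF : Semiconj expMap F f) (hM : MarkovPartition f r a) (j : ℕ) :
    liftFset F a 0 ⊆ liftFset F a j := fun t ht => by
  rw [liftFset, mem_preimage, mem_preimage, hF.iterate_right j t]
  exact (mapsTo_range_of_markovPartition hM).iterate j ht

lemma liftFset_mono (hF : Semiconj expMap F f) (hM : MarkovPartition f r a) {i j : ℕ}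
    (hij : i ≤ j) : liftFset F a i ⊆ liftFset F a j := by
  obtain ⟨l, rfl⟩ := Nat.exists_eq_add_of_le hij
  rw [add_comm, liftFset_add, ← zero_add i, liftFset_add, zero_add]
  exact preimage_mono (liftFset_zero_subset hF hM l)

lemma liftFset_nonempty (hF : Semiconj expMap F f) (hM : MarkovPartition f r a) (j : ℕ) :
    (liftFset F a j).Nonempty := by
  obtain ⟨x, -, hax, -⟩ := hM.cyclic
  exact ⟨x 0, liftFset_zero_subset hF hM j ⟨0, hax 0⟩⟩

lemma isClosed_liftFset (hFc : Continuous F) (j : ℕ) : IsClosed (liftFset F a j) :=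
  (finite_range a).isClosed.preimage (continuous_expMap.comp (hFc.iterate j))

lemma finite_preimage_expMap_singleton_inter_Icc (z : ℂ) (c d : ℝ) :
    (expMap ⁻¹' {z} ∩ Icc c d).Finite := by
  rcases (expMap ⁻¹' {z} ∩ Icc c d).eq_empty_or_nonempty with h | ⟨y, hy, -⟩
  · simp [h]
  refine ((finite_Icc ⌈c - y⌉ ⌊d - y⌋).image fun k : ℤ => y + k).subset ?_
  rintro s ⟨hs, hcs, hsd⟩
  obtain ⟨k, hk⟩ := expMap_eq_iff.1 (hs.trans hy.symm)
  exact ⟨k, ⟨Int.ceil_le.2 (by linarith), Int.le_floor.2 (by linarith)⟩, hk.symm⟩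

lemma liftFset_inter_Icc_finite (hFc : Continuous F) (hFi : Injective F) (j : ℕ) (c d : ℝ) :
    (liftFset F a j ∩ Icc c d).Finite := by
  have hzero : ∀ c d, (expMap ⁻¹' range a ∩ Icc c d).Finite := fun c d => by
    rw [← iUnion_singleton_eq_range, preimage_iUnion, iUnion_inter]
    exact finite_iUnion fun k => finite_preimage_expMap_singleton_inter_Icc _ c d
  have hK : IsCompact (F^[j] '' Icc c d) := isCompact_Icc.image (hFc.iterate j)
  obtain ⟨lo, hlo⟩ := hK.bddBelow
  obtain ⟨hi, hhi⟩ := hK.bddAbove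
  refine ((hzero lo hi).preimage (hFi.iterate j).injOn).subset ?_
  rintro t ⟨ht, htcd⟩
  exact ⟨ht, hlo ⟨t, htcd, rfl⟩, hhi ⟨t, htcd, rfl⟩⟩
lemma isComplArc_succ_iff (hFc : Continuous F) (hF : Semiconj expMap F f)
    (hM : MarkovPartition f r a) (j : ℕ) {B : Set ℂ} :
    IsComplArc f a (j + 1) B ↔ ∃ γ γ', IsGap (liftFset F a j) γ γ' ∧ B = expMap '' Icc γ γ' := by
  rw [IsComplArc, exists_eq_closure_connectedComponentIn_iff_isGap] <;>
    rw [preimage_expMap_Fset hF]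
  exacts [isClosed_liftFset hFc j, liftFset_nonempty hF hM j]

lemma ncard_setOf_isComplArc_subset (hFc : Continuous F) (hFi : Injective F)
    (hF : Semiconj expMap F f) (hM : MarkovPartition f r a) {j : ℕ}
    (hα : α ∈ liftFset F a j) (hβ : β ∈ liftFset F a j) (hαβ : α < β) (hβα : β < α + 1) :
    {B | IsComplArc f a (j + 1) B ∧ B ⊆ expMap '' Icc α β}.Finite ∧
    {B | IsComplArc f a (j + 1) B ∧ B ⊆ expMap '' Icc α β}.ncard =
      (liftFset F a j ∩ Ioo α β).ncard + 1 := by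
  have hfin : ∀ c d, (expMap ⁻¹' Fset f a (j + 1) ∩ Icc c d).Finite := fun c d => by
    rw [preimage_expMap_Fset hF]; exact liftFset_inter_Icc_finite hFc hFi j c d
  simp_rw [isComplArc_succ_iff hFc hF hM, ← preimage_expMap_Fset hF] at hα hβ ⊢
  exact ncard_setOf_gapArc_subset hfin hα hβ hαβ hβα

lemma sub_lt_one_of_disjoint_liftFset_zero (hM : MarkovPartition f r a)
    (h : Disjoint (Ioo α β) (liftFset F a 0)) : β - α < 1 := by
  by_contra! hlen
  have hr := hM.rpos
  obtain ⟨x, hxm, hax, hxl⟩ := hM.cyclic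
  have key : ∀ k, a k = expMap (α + 1) := fun k => by
    obtain ⟨h₁, h₂⟩ := toIocMod_mem_Ioc one_pos α (x k)
    have hmem : toIocMod one_pos α (x k) ∈ liftFset F a 0 :=
      mem_liftFset_zero.2 ⟨k, by rw [hax, expMap_toIocMod]⟩
    rcases h₂.lt_or_eq with h₂ | h₂
    · exact absurd hmem (disjoint_left.1 h ⟨h₁, by linarith⟩)
    · rw [hax, ← h₂, expMap_toIocMod]
  have h01 : (0 : Fin (r + 1)) < ⟨1, by omega⟩ := Fin.mk_succ_pos 0 hr
  have h1last : x ⟨1, by omega⟩ ≤ x (Fin.last r) := hxm.monotone (Fin.le_last _)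
  exact expMap_ne_of_lt (hxm h01) (by linarith) (by rw [← hax, ← hax, key, key])

lemma exists_image_Ioo_subset_openArc (hM : MarkovPartition f r a) (hu : u ∈ liftFset F a 0)
    (h : Disjoint (Ioo u v) (liftFset F a 0)) :
    ∃ k, expMap '' Ioo u v ⊆ openArc (a k) (a (k + 1)) := by
  obtain ⟨x, hxm, hax, hxl⟩ := hM.cyclic
  obtain ⟨k, hk⟩ := mem_liftFset_zero.1 hu
  obtain ⟨j, hj⟩ := expMap_eq_iff.1 ((hax k).symm.trans hk)
  obtain ⟨m, hm₁, hm₂⟩ : ∃ m : ℤ, x k < x (k + 1) + m ∧ x (k + 1) + m < x k + 1 := by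
    have h0k : x 0 ≤ x k := hxm.monotone (Fin.zero_le k)
    by_cases hk' : k = Fin.last r
    · have h0 : x 0 < x (Fin.last r) := hxm (Fin.val_pos_iff.1 hM.rpos)
      subst hk'
      exact ⟨1, by rw [Fin.last_add_one]; push_cast; linarith,
        by rw [Fin.last_add_one]; push_cast; linarith⟩
    · have hlt : k < k + 1 := Fin.lt_add_one_iff.2 (lt_of_le_of_ne (Fin.le_last k) hk')
      exact ⟨0, by simpa using hxm hlt,
        by simpa using (hxm.monotone (Fin.le_last (k + 1))).trans_lt (by linarith)⟩
  set y := x (k + 1) + ((m - j : ℤ) : ℝ)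
  have hy : a (k + 1) = expMap y := by rw [hax, expMap_add_intCast]
  have hvy : v ≤ y := not_lt.1 fun hyv => disjoint_left.1 h
    ⟨by push_cast [y]; linarith, hyv⟩ ⟨k + 1, hy⟩
  refine ⟨k, ?_⟩
  rintro _ ⟨w, hw, rfl⟩
  exact ⟨u, w, y, hk, rfl, hy, hw.1, hw.2.trans_le hvy, by push_cast [y]; linarith⟩

/-- `f` is injective on the partition arc containing the gap, so `F` cannot wrap it around the
circle. -/
lemma max_le_min_add_one_of_isGap (hFc : Continuous F) (hFi : Injective F)
    (hF : Semiconj expMap F f) (hM : MarkovPartition f r a) (h : IsGap (liftFset F a 0) u v) :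
    max (F u) (F v) ≤ min (F u) (F v) + 1 := by
  obtain ⟨k, hk⟩ := exists_image_Ioo_subset_openArc hM h.1 h.2.2.2
  have hlen := sub_lt_one_of_disjoint_liftFset_zero hM h.2.2.2
  by_contra! hc
  obtain ⟨c, hc₁, hc₂⟩ : ∃ c, min (F u) (F v) < c ∧ c + 1 < max (F u) (F v) :=
    ⟨min (F u) (F v) + (max (F u) (F v) - min (F u) (F v) - 1) / 2, by linarith, by linarith⟩
  have himg := image_Ioo_of_injective hFc hFi h.2.2.1.le
  obtain ⟨w₁, hw₁, hF₁⟩ : c ∈ F '' Ioo u v := by rw [himg]; constructor <;> linarith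
  obtain ⟨w₂, hw₂, hF₂⟩ : c + 1 ∈ F '' Ioo u v := by rw [himg]; constructor <;> linarith
  have hf : f (expMap w₁) = f (expMap w₂) := by
    rw [← hF w₁, ← hF w₂, hF₁, hF₂, ← Int.cast_one, expMap_add_intCast]
  have hw : expMap w₁ = expMap w₂ := hM.injOn k (hk ⟨w₁, hw₁, rfl⟩) (hk ⟨w₂, hw₂, rfl⟩) hf
  obtain rfl : w₁ = w₂ := injOn_expMap_Ico u ⟨hw₁.1.le, by linarith [hw₁.2]⟩
    ⟨hw₂.1.le, by linarith [hw₂.2]⟩ hw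
  linarith

lemma ncard_liftFset_zero_inter_Ioo_le {c d : ℝ} (hc : c ∈ liftFset F a 0) (hd : d ≤ c + 1) :
    (liftFset F a 0 ∩ Ioo c d).ncard ≤ r := by
  have hinj : InjOn expMap (liftFset F a 0 ∩ Ioo c d) :=
    (injOn_expMap_Ico c).mono (inter_subset_right.trans (Ioo_subset_Ico_self.trans
      (Ico_subset_Ico_right hd)))
  have hsub : expMap '' (liftFset F a 0 ∩ Ioo c d) ⊆ range a \ {expMap c} := by
    rintro _ ⟨t, ⟨ht, hct, htd⟩, rfl⟩
    exact ⟨ht, fun h => expMap_ne_of_lt hct (by linarith) h.symm⟩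
  have hrange : (range a).ncard ≤ r + 1 := by
    rw [← image_univ]
    exact (ncard_image_le (toFinite _)).trans (by simp)
  calc (liftFset F a 0 ∩ Ioo c d).ncard = (expMap '' (liftFset F a 0 ∩ Ioo c d)).ncard :=
        hinj.ncard_image.symm
    _ ≤ (range a \ {expMap c}).ncard := ncard_le_ncard hsub (toFinite _)
    _ = (range a).ncard - 1 := ncard_sdiff_singleton_of_mem (mem_liftFset_zero.1 hc)
    _ ≤ r := by omega

theorem ncard_liftFset_inter_Ioo_add_one_le (hFc : Continuous F) (hFi : Injective F)
    (hF : Semiconj expMap F f) (hM : MarkovPartition f r a) (q : ℕ)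
    (h : IsGap (liftFset F a 0) u v) : (liftFset F a q ∩ Ioo u v).ncard + 1 ≤ (r + 1) ^ q := by
  induction q generalizing u v with
  | zero => simp [disjoint_iff_inter_eq_empty.1 h.2.2.2.symm]
  | succ q ih =>
    have hfin : ∀ j c d, (liftFset F a j ∩ Ioo c d).Finite := fun j c d =>
      (liftFset_inter_Icc_finite hFc hFi j c d).subset
        (inter_subset_inter_right _ Ioo_subset_Icc_self)
    have hF0 : ∀ t ∈ liftFset F a 0, F t ∈ liftFset F a 0 := fun t ht => by
      have := liftFset_zero_subset hF hM 1 ht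
      rwa [← zero_add 1, liftFset_add, iterate_one] at this
    have hmin : min (F u) (F v) ∈ liftFset F a 0 := by
      rcases min_choice (F u) (F v) with h' | h' <;> rw [h']
      exacts [hF0 u h.1, hF0 v h.2.1]
    have hmax : max (F u) (F v) ∈ liftFset F a 0 := by
      rcases max_choice (F u) (F v) with h' | h' <;> rw [h']
      exacts [hF0 u h.1, hF0 v h.2.1]
    have hspan := max_le_min_add_one_of_isGap hFc hFi hF hM h
    rw [liftFset_add q 1, iterate_one, ncard_preimage_inter_Ioo hFc hFi h.2.2.1.le]
    calc _ ≤ ((liftFset F a 0 ∩ Ioo (min (F u) (F v)) (max (F u) (F v))).ncard + 1) * (r + 1) ^ q :=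
          ncard_inter_Ioo_add_one_le (hfin 0) (hfin q) (fun _ _ => ih) hmin hmax
            (min_lt_max.2 (hFi.ne h.2.2.1.ne))
      _ ≤ (r + 1) * (r + 1) ^ q :=
          Nat.mul_le_mul_right _ (by linarith [ncard_liftFset_zero_inter_Ioo_le hmin hspan])
      _ = (r + 1) ^ (q + 1) := by ring

end MarkovLift

section InvariantInterval

variable {G : ℝ → ℝ} {u v : ℝ}

lemma mapsTo_Icc_of_fixed_endpoint (hGc : Continuous G) (hGm : StrictMono G) (huv : u < v)
    (hfix : G u = u ∨ G v = v) (hu : ∀ w ∈ Ioo u v, G w ≠ u) (hv : ∀ w ∈ Ioo u v, G w ≠ v) :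
    MapsTo G (Icc u v) (Icc u v) := by
  suffices u ≤ G u ∧ G v ≤ v from fun t ht =>
    ⟨this.1.trans (hGm.monotone ht.1), (hGm.monotone ht.2).trans this.2⟩
  have hivt := intermediate_value_Ioo huv.le hGc.continuousOn
  rcases hfix with h | h
  · refine ⟨h.ge, not_lt.1 fun hvG => ?_⟩
    obtain ⟨w, hw, hwv⟩ := hivt ⟨h.symm ▸ huv, hvG⟩
    exact hv w hw hwv
  · refine ⟨not_lt.1 fun hGu => ?_, h.le⟩
    obtain ⟨w, hw, hwu⟩ := hivt ⟨hGu, h.symm ▸ huv⟩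
    exact hu w hw hwu

lemma exists_ne_forall_abs_iterate_sub_le (hGm : StrictMono G)
    (hmaps : MapsTo G (Icc u v) (Icc u v)) (huv : u < v) {ε : ℝ} (hε : 0 < ε) :
    ∃ s ∈ Icc u v, ∃ t ∈ Icc u v, s ≠ t ∧ ∀ k, |G^[k] s - G^[k] t| ≤ ε := by
  by_cases hfix : ∀ w ∈ Icc u v, G w = w
  · have hu : u ∈ Icc u v := left_mem_Icc.2 huv.le
    have ht : min v (u + ε) ∈ Icc u v := ⟨le_min huv.le (by linarith), min_le_left _ _⟩
    refine ⟨u, hu, _, ht, (lt_min huv (by linarith)).ne, fun k => ?_⟩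
    rw [iterate_fixed (hfix u hu), iterate_fixed (hfix _ ht), abs_sub_comm,
      abs_of_nonneg (by linarith [ht.1])]
    linarith [min_le_right v (u + ε)]
  push Not at hfix
  obtain ⟨w, hw, hGw⟩ := hfix
  -- The orbit of `w` is monotone and bounded, hence Cauchy: take two consecutive points of its
  -- tail.
  have horb : ∀ k, G^[k] w ∈ Icc u v := fun k => hmaps.iterate k hw
  have hcauchy : CauchySeq fun k => G^[k] w := by
    rcases le_total w (G w) with h | h
    · exact (tendsto_atTop_ciSup (hGm.monotone.monotone_iterate_of_le_map h)
        ⟨v, by rintro _ ⟨k, rfl⟩; exact (horb k).2⟩).cauchySeq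
    · exact (tendsto_atTop_ciInf (hGm.monotone.antitone_iterate_of_map_le h)
        ⟨u, by rintro _ ⟨k, rfl⟩; exact (horb k).1⟩).cauchySeq
  obtain ⟨N, hN⟩ := Metric.cauchySeq_iff.1 hcauchy ε hε
  refine ⟨G^[N] w, horb N, G^[N + 1] w, horb (N + 1), ?_, fun k => ?_⟩
  · rw [iterate_succ_apply]
    exact (hGm.injective.iterate N).ne hGw.symm
  · rw [← iterate_add_apply, ← iterate_add_apply, ← Real.dist_eq]
    exact (hN _ (by omega) _ (by omega)).le

end InvariantInterval

section Expansivity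

variable {f : ℂ → ℂ} {F G : ℝ → ℝ} {r : ℕ} {a : Fin (r + 1) → ℂ} {q : ℕ} {u v : ℝ}

/-- Expansivity at time `q * k + j` would separate `F^[j] (G^[k] s)` from `F^[j] (G^[k] t)`,
which uniform continuity of the first `q` iterates of `F` on `[u, v]` forbids. -/
theorem false_of_mapsTo_Icc (hexp : ExpansiveOn f) (hFc : Continuous F)
    (hF : Semiconj expMap F f) (hq : 0 < q) (hG : Semiconj expMap G f^[q]) (hGm : StrictMono G)
    (huv : u < v) (hvu : v < u + 1) (hmaps : MapsTo G (Icc u v) (Icc u v)) : False := by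
  obtain ⟨δ, hδ, hsep⟩ := hexp
  have hΦ : UniformContinuousOn (fun t (j : Fin q) => expMap (F^[j] t)) (Icc u v) :=
    isCompact_Icc.uniformContinuousOn_of_continuous
      (continuous_pi fun j : Fin q => continuous_expMap.comp (hFc.iterate j)).continuousOn
  obtain ⟨ε, hε, hΦε⟩ := Metric.uniformContinuousOn_iff_le.1 hΦ δ hδ
  obtain ⟨s, hs, t, ht, hst, hclose⟩ := exists_ne_forall_abs_iterate_sub_le hGm hmaps huv hε
  have hne : expMap s ≠ expMap t := fun h => hst <|
    injOn_expMap_Ico u ⟨hs.1, hs.2.trans_lt hvu⟩ ⟨ht.1, ht.2.trans_lt hvu⟩ h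
  obtain ⟨n, hn⟩ := hsep _ (expMap_mem_S1 s) _ (expMap_mem_S1 t) hne
  have hiter : ∀ x, f^[n] (expMap x) = expMap (F^[n % q] (G^[n / q] x)) := fun x => by
    conv_lhs => rw [← Nat.mod_add_div n q, iterate_add_apply, iterate_mul]
    rw [← hG.iterate_right, ← hF.iterate_right]
  rw [hiter, hiter, ← dist_eq_norm] at hn
  have hdist := hΦε _ (hmaps.iterate _ hs) _ (hmaps.iterate _ ht)
    (by rw [Real.dist_eq]; exact hclose (n / q))
  linarith [dist_le_pi_dist (fun j : Fin q => expMap (F^[j] (G^[n / q] s)))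
    (fun j : Fin q => expMap (F^[j] (G^[n / q] t))) ⟨n % q, Nat.mod_lt n hq⟩]

theorem liftFset_inter_Ioo_nonempty (hexp : ExpansiveOn f) (hFc : Continuous F)
    (hFi : Injective F) (hF : Semiconj expMap F f) (hM : MarkovPartition f r a) (hq : 0 < q)
    (hqo : OrientPresIter f q) {y : ℝ} (h : IsGap (liftFset F a 0) u v) (hy : y = u ∨ y = v)
    (hfix : f^[q] (expMap y) = expMap y) : (liftFset F a q ∩ Ioo u v).Nonempty := by
  by_contra hemp
  obtain ⟨k, hk⟩ := expMap_eq_iff.1 ((hF.iterate_right q y).trans hfix)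
  obtain ⟨G, hGdef⟩ : ∃ G : ℝ → ℝ, ∀ t, G t = F^[q] t - k := ⟨_, fun _ => rfl⟩
  have hG : Semiconj expMap G f^[q] := fun t => by
    rw [hGdef, ← hF.iterate_right, sub_eq_add_neg, ← Int.cast_neg, expMap_add_intCast]
  have hGm : StrictMono G := fun s t hst => by
    rw [hGdef, hGdef]
    exact sub_lt_sub_right (strictMono_iterate_of_orientPresIter hFc hFi hF hqo hst) _
  have hGy : G y = y := by rw [hGdef, hk, add_sub_cancel_right]
  have hGΛ : ∀ w ∈ Ioo u v, G w ∉ liftFset F a 0 := fun w hw hGw => hemp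
    ⟨w, by rw [liftFset, mem_preimage, mem_preimage, hF.iterate_right, ← hG w]; exact hGw, hw⟩
  have hGc : Continuous G := by
    rw [funext hGdef]; exact (hFc.iterate q).sub continuous_const
  have hmaps := mapsTo_Icc_of_fixed_endpoint hGc hGm h.2.2.1
    (by rcases hy with rfl | rfl; exacts [.inl hGy, .inr hGy])
    (fun w hw hGw => hGΛ w hw (hGw ▸ h.1)) (fun w hw hGw => hGΛ w hw (hGw ▸ h.2.1))
  exact false_of_mapsTo_Icc hexp hFc hF hq hG hGm h.2.2.1
    (by linarith [sub_lt_one_of_disjoint_liftFset_zero hM h.2.2.2]) hmaps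

end Expansivity

section Subdivision

variable {f : ℂ → ℂ} {F : ℝ → ℝ} {r : ℕ} {a : Fin (r + 1) → ℂ} {α β : ℝ}

lemma eq_min_or_eq_max_of_eq_or_eq {x y z : ℝ} (h : z = x ∨ z = y) :
    z = min x y ∨ z = max x y := by
  rcases le_total x y with hxy | hxy <;> rcases h with rfl | rfl <;> simp [hxy]

lemma exists_endpoint_eq_of_mem (hF : Semiconj expMap F f) (hM : MarkovPartition f r a) {m : ℕ}
    (hgap : IsGap (liftFset F a m) α β) {z : ℂ} (hz : z ∈ range a)
    (hzA : z ∈ expMap '' Icc α β) : ∃ s, (s = α ∨ s = β) ∧ expMap s = z := by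
  obtain ⟨s, hs, rfl⟩ := hzA
  have hsΛ : s ∈ liftFset F a m := liftFset_zero_subset hF hM m (mem_liftFset_zero.2 hz)
  refine ⟨s, ?_, rfl⟩
  rcases hs.1.eq_or_lt with h | h
  · exact .inl h.symm
  rcases hs.2.eq_or_lt with h' | h'
  · exact .inr h'
  exact absurd hsΛ (disjoint_left.1 hgap.2.2.2 ⟨h, h'⟩)

/-- `F^[m]` carries the gap `(α, β)` of the lift of `F_{m+1}` onto a gap of the lift of the
partition, with the periodic endpoint going to a point fixed by `f^[q]`. -/
theorem ncard_liftFset_inter_Ioo_bounds (hexp : ExpansiveOn f) (hFc : Continuous F)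
    (hFi : Injective F) (hF : Semiconj expMap F f) (hM : MarkovPartition f r a) {m q : ℕ}
    (hq : 0 < q) (hqo : OrientPresIter f q) (hgap : IsGap (liftFset F a m) α β) {s : ℝ}
    (hs : s = α ∨ s = β) (hfix : f^[q] (expMap s) = expMap s) :
    1 ≤ (liftFset F a (m + q) ∩ Ioo α β).ncard ∧
      (liftFset F a (m + q) ∩ Ioo α β).ncard + 1 ≤ (r + 1) ^ q := by
  rw [add_comm m q, liftFset_add, ncard_preimage_inter_Ioo (hFc.iterate m) (hFi.iterate m)
    hgap.2.2.1.le]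
  rw [← zero_add m, liftFset_add] at hgap
  have hgap₀ := hgap.image (hFc.iterate m) (hFi.iterate m)
  have hy := eq_min_or_eq_max_of_eq_or_eq (hs.imp (congrArg F^[m]) (congrArg F^[m]))
  have hfix' : f^[q] (expMap (F^[m] s)) = expMap (F^[m] s) := by
    rw [hF.iterate_right, ← iterate_add_apply, add_comm, iterate_add_apply, hfix]
  refine ⟨(ncard_pos ((liftFset_inter_Icc_finite hFc hFi q _ _).subset
    (inter_subset_inter_right _ Ioo_subset_Icc_self))).2 ?_,
    ncard_liftFset_inter_Ioo_add_one_le hFc hFi hF hM q hgap₀⟩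
  exact liftFset_inter_Ioo_nonempty hexp hFc hFi hF hM hq hqo hgap₀ hy hfix'

end Subdivision

theorem complementary_arc_subdivision_count_general
    (f : ℂ → ℂ) (d : ℤ)
    (hcov : IsCircleCovering f d) (hexp : ExpansiveOn f)
    (r : ℕ) (a : Fin (r + 1) → ℂ) (hM : MarkovPartition f r a)
    (a0 : ℂ) (ha0 : a0 ∈ Set.range a) (q : ℕ) (hq : OPPeriod f a0 q)
    (n : ℕ) (hn : 1 ≤ n) (A : Set ℂ) (hA : IsComplArc f a n A) (haA : a0 ∈ A) :
    {B : Set ℂ | IsComplArc f a (n + q) B ∧ B ⊆ A}.Finite ∧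
    2 ≤ {B : Set ℂ | IsComplArc f a (n + q) B ∧ B ⊆ A}.ncard ∧
    {B : Set ℂ | IsComplArc f a (n + q) B ∧ B ⊆ A}.ncard ≤ (r + 1) ^ q := by
  obtain ⟨F, hFc, hFe, -⟩ := hcov
  have hF : Semiconj expMap F f := fun t => (hFe t).symm
  have hFi := injective_lift_of_expansiveOn hexp hFc hF
  obtain ⟨m, rfl⟩ : ∃ m, n = m + 1 := ⟨n - 1, by omega⟩
  obtain ⟨α, β, hgap, rfl⟩ := (isComplArc_succ_iff hFc hF hM m).1 hA
  have hlen := sub_lt_one_of_disjoint_liftFset_zero hM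
    (hgap.2.2.2.mono_right (liftFset_zero_subset hF hM m))
  have hmono := liftFset_mono hF hM (Nat.le_add_right m q)
  obtain ⟨hfin, hcard⟩ := ncard_setOf_isComplArc_subset hFc hFi hF hM (hmono hgap.1)
    (hmono hgap.2.1) hgap.2.2.1 (by linarith)
  obtain ⟨s, hs, rfl⟩ := exists_endpoint_eq_of_mem hF hM hgap ha0 haA
  obtain ⟨hlow, hup⟩ :=
    ncard_liftFset_inter_Ioo_bounds hexp hFc hFi hF hM hq.1 hq.2.2.1 hgap hs hq.2.1
  rw [show m + 1 + q = m + q + 1 by omega, hcard]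
  exact ⟨hfin, by omega, by omega⟩

/-- **Lemma (pre-expansivity).** Let `a₀` be a periodic partition point with
orientation-preserving period `q`, and let `A` be a complementary arc of `F_n`
having `a₀` as an endpoint. Then `A` contains at least two and at most `(r+1)^q`
complementary arcs of `F_{n+q}`. -/
theorem complementary_arc_subdivision_count
    (f : ℂ → ℂ) (d : ℤ) (hd : 2 ≤ d.natAbs)
    (hcov : IsCircleCovering f d) (hexp : ExpansiveOn f)
    (r : ℕ) (a : Fin (r + 1) → ℂ) (hM : MarkovPartition f r a)
    (hUV : CondUV f r a) (hHol : CondHol f r a)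
    (a0 : ℂ) (ha0 : a0 ∈ Set.range a) (q : ℕ) (hq : OPPeriod f a0 q)
    (n : ℕ) (hn : 1 ≤ n) (A : Set ℂ) (hA : IsComplArc f a n A) (haA : a0 ∈ A) :
    {B : Set ℂ | IsComplArc f a (n + q) B ∧ B ⊆ A}.Finite ∧
    2 ≤ {B : Set ℂ | IsComplArc f a (n + q) B ∧ B ⊆ A}.ncard ∧
    {B : Set ℂ | IsComplArc f a (n + q) B ∧ B ⊆ A}.ncard ≤ (r + 1) ^ q :=
  complementary_arc_subdivision_count_general f d hcov hexp r a hM a0 ha0 q hq n hn A hA haA
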